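/- The null space matrix N_R = [[g,0],[0,0],[0,I₃],[0,0]] ∈ ℝ^{15×4} associated with the SE₂(3) IMU state parameterization satisfies H_i N_R + H_j N_R' = 0 where H_i = −A·F_{ij}, H_j = A, A is any 15×15 matrix whose structure is block-diagonal with identity in the first nine rows, F_{ij} = [[I,0,0,⋆],[Δt g^∧,I,0,⋆],[½Δt² g^∧,Δt I,I,⋆],[0,0,0,I]], and the bias columns of N_R are zero; i.e., (−F_{ij}) N_R + N_R = 0 when A = I. -/

import Mathlib

open Matrix

/-- The skew-symmetric matrix `a^∧` of `a ∈ ℝ³`. -/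
def hat (a : Fin 3 → ℝ) : Matrix (Fin 3) (Fin 3) ℝ :=
  !![0, -a 2, a 1; a 2, 0, -a 0; -a 1, a 0, 0]

/-- Index type for the 15-dimensional IMU error state `(δφ, δv, δr, δb)`. -/
abbrev Idx15 := Fin 3 ⊕ (Fin 3 ⊕ (Fin 3 ⊕ Fin 6))

/-- The 15×15 direct-integration Jacobian
`F_{ij} = [[I,0,0,⋆],[Δt g^∧,I,0,⋆],[½Δt² g^∧,Δt I,I,⋆],[0,0,0,I]]`
under the `SE₂(3)` parameterization, with arbitrary bias blocks `S₁, S₂, S₃`. -/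
noncomputable def F15 (g : Fin 3 → ℝ) (Δt : ℝ)
    (S₁ S₂ S₃ : Matrix (Fin 3) (Fin 6) ℝ) : Matrix Idx15 Idx15 ℝ :=
  fromBlocks 1 (fromCols 0 (fromCols 0 S₁))
    (fromRows (Δt • hat g) (fromRows (((1 : ℝ) / 2 * Δt ^ 2) • hat g) 0))
    (fromBlocks 1 (fromCols 0 S₂)
      (fromRows (Δt • (1 : Matrix (Fin 3) (Fin 3) ℝ)) 0)
      (fromBlocks 1 S₃ 0 1))

/-- The null space `N_R = [[g,0],[0,0],[0,I₃],[0,0]] ∈ ℝ^{15×4}` for the `SE₂(3)`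
IMU state parameterization. -/
def N15 (g : Fin 3 → ℝ) : Matrix Idx15 (Fin 1 ⊕ Fin 3) ℝ :=
  fromBlocks (Matrix.of fun i (_ : Fin 1) => g i) 0
    0 (fromRows 0 (fromRows 1 0))

/-!
`N_R` has two column blocks. The gravity column `(g, 0, 0, 0)` is fixed by `F_{ij}` because
the only blocks that could move it are multiples of `g^∧`, and `g^∧ g = g × g = 0`. The position
columns `(0, 0, I₃, 0)` pick out the third block column of `F_{ij}`, which is `(0, 0, I₃, 0)` itself.
-/

theorem hat_mulVec (a b : Fin 3 → ℝ) : hat a *ᵥ b = a ⨯₃ b := by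
  ext i
  fin_cases i <;> simp [hat, cross_apply, mulVec, dotProduct, Fin.sum_univ_three] <;> ring

theorem hat_mul_replicateCol_self {ι : Type*} (a : Fin 3 → ℝ) :
    hat a * replicateCol ι a = 0 := by
  rw [← replicateCol_mulVec, hat_mulVec, cross_self, replicateCol_zero]

theorem F15_mul_N15 (g : Fin 3 → ℝ) (Δt : ℝ) (S₁ S₂ S₃ : Matrix (Fin 3) (Fin 6) ℝ) :
    F15 g Δt S₁ S₂ S₃ * N15 g = N15 g := by
  have hcol : (of fun i (_ : Fin 1) => g i) = replicateCol (Fin 1) g := rfl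
  simp only [F15, N15, hcol, fromBlocks_multiply, fromRows_mul, fromCols_mul_fromRows,
    fromBlocks_mul_fromRows, smul_mul, hat_mul_replicateCol_self, Matrix.mul_zero,
    Matrix.zero_mul, Matrix.one_mul, add_zero, zero_add, smul_zero, fromRows_zero]

/-- `F_{ij} N_R = N_R`, hence `(−F_{ij}) N_R + N_R = 0`: the error Jacobian row
`[−F_{ij}, I]` annihilates the stacked null space. -/
theorem F15_N15 (g : Fin 3 → ℝ) (Δt : ℝ) (S₁ S₂ S₃ : Matrix (Fin 3) (Fin 6) ℝ) :
    F15 g Δt S₁ S₂ S₃ * N15 g = N15 g ∧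
    (-(F15 g Δt S₁ S₂ S₃)) * N15 g + N15 g = 0 := by
  refine ⟨F15_mul_N15 g Δt S₁ S₂ S₃, ?_⟩
  rw [Matrix.neg_mul, F15_mul_N15, neg_add_cancel]
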